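/- Let (Ω, μ) be a probability space and X, Y, Z : Ω → ℝ measurable random variables such that the joint law of (X, Y, Z) has density (x₀, x, x_f) ↦ ρ₀(x₀) q₁(x₀, x) q₂(x, x_f) with respect to Lebesgue measure on ℝ³, where ρ₀ : ℝ → [0,∞) and q₁, q₂ : ℝ × ℝ → [0,∞) are measurable, and set q(x₀, x_f) = ∫ q₁(x₀, y) q₂(y, x_f) dy. Then for almost every (x₀, x_f) with respect to the law of (X, Z), one has 0 < q(x₀, x_f) < ∞ and the conditional distribution of Y given (X, Z) = (x₀, x_f) is the probability measure on ℝ with Lebesgue density x ↦ q₂(x, x_f) q₁(x₀, x) / q(x₀, x_f). (This is the bridge density 𝒫_A(x, t) = Q(x_f, t_f | x, t) Q(x, t | x₀, 0) / Q(x_f, t_f | x₀, 0) used to define the maximum likelihood transition path.) -/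

import Mathlib

/-!
Disintegration of a joint density: if `((X, Z), Y)` has density `f` on `(ℝ × ℝ) × ℝ`, its law is
the law of `(X, Z)`, which has density `m a = ∫ f (a, y) dy`, composed with the kernel
`a ↦ (f (a, ·) / m a) • Lebesgue`, so by uniqueness of disintegrations this kernel is the
conditional distribution of `Y`. For the Markov density, `m (x₀, x_f) = ρ₀ x₀ * q (x₀, x_f)` is
almost surely positive and finite, so `ρ₀ x₀` cancels in the quotient.
-/

open MeasureTheory ProbabilityTheory
open scoped ENNReal

namespace MeasureTheory

variable {α β : Type*} [MeasurableSpace α] [MeasurableSpace β]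

theorem MeasurePreserving.map_withDensity_comp {μ : Measure α} {ν : Measure β} {e : α → β}
    (he : MeasurePreserving e μ ν) (he' : MeasurableEmbedding e) (g : β → ℝ≥0∞) :
    (μ.withDensity (g ∘ e)).map e = ν.withDensity g := by
  ext s hs
  rw [Measure.map_apply he.measurable hs, withDensity_apply _ (he.measurable hs),
    withDensity_apply _ hs]
  exact he.setLIntegral_comp_preimage_emb he' g s

theorem Measure.map_fst_withDensity_prod (μ : Measure α) [SFinite μ] (ν : Measure β) [SFinite ν]
    {f : α × β → ℝ≥0∞} (hf : Measurable f) :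
    ((μ.prod ν).withDensity f).map Prod.fst = μ.withDensity fun a => ∫⁻ b, f (a, b) ∂ν := by
  ext s hs
  rw [Measure.map_apply measurable_fst hs, ← Set.prod_univ, withDensity_apply _ (hs.prod .univ),
    withDensity_apply _ hs, setLIntegral_prod _ hf.aemeasurable]
  simp only [Measure.restrict_univ]

theorem Measure.map_withDensity_prod_prod_swap_last {γ : Type*} [MeasurableSpace γ]
    (μ : Measure α) (ν : Measure β) (ξ : Measure γ) [SFinite μ] [SFinite ν] [SFinite ξ]
    (g : (α × γ) × β → ℝ≥0∞) :
    ((μ.prod (ν.prod ξ)).withDensity fun r => g ((r.1, r.2.2), r.2.1)).map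
        (fun r => ((r.1, r.2.2), r.2.1)) = ((μ.prod ξ).prod ν).withDensity g := by
  let T : α × β × γ ≃ᵐ (α × γ) × β :=
    (MeasurableEquiv.prodCongr (.refl α) .prodComm).trans MeasurableEquiv.prodAssoc.symm
  have hT : MeasurePreserving T (μ.prod (ν.prod ξ)) ((μ.prod ξ).prod ν) :=
    ((MeasurePreserving.id μ).prod Measure.measurePreserving_swap).trans
      (MeasurePreserving.symm _ (measurePreserving_prodAssoc μ ξ ν))
  exact hT.map_withDensity_comp T.measurableEmbedding g

end MeasureTheory

namespace ProbabilityTheory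

variable {α β : Type*} [MeasurableSpace α] [MeasurableSpace β]

/-- Where `∫⁻ b', f (a, b') ∂ν` is `0` or `∞`, this is the zero measure rather than a probability
measure. -/
noncomputable def condDensityKernel (ν : Measure β) [SFinite ν] (f : α × β → ℝ≥0∞) :
    Kernel α β :=
  Kernel.withDensity (Kernel.const α ν) fun a b => f (a, b) / ∫⁻ b', f (a, b') ∂ν

variable {ν : Measure β} [SFinite ν] {f : α × β → ℝ≥0∞}

theorem condDensityKernel_apply (hf : Measurable f) (a : α) :
    condDensityKernel ν f a = ν.withDensity fun b => f (a, b) / ∫⁻ b', f (a, b') ∂ν := by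
  rw [condDensityKernel, Kernel.withDensity_apply _ (by fun_prop), Kernel.const_apply]

theorem condDensityKernel_apply_univ (hf : Measurable f) (a : α) :
    condDensityKernel ν f a .univ = (∫⁻ b, f (a, b) ∂ν) * (∫⁻ b, f (a, b) ∂ν)⁻¹ := by
  simp_rw [condDensityKernel_apply hf, withDensity_apply _ .univ, Measure.restrict_univ,
    div_eq_mul_inv]
  exact lintegral_mul_const _ (by fun_prop)

theorem isFiniteKernel_condDensityKernel (hf : Measurable f) :
    IsFiniteKernel (condDensityKernel ν f) :=
  ⟨⟨1, ENNReal.one_lt_top, fun a =>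
    (condDensityKernel_apply_univ hf a).trans_le (ENNReal.mul_inv_le_one _)⟩⟩

theorem withDensity_prod_eq_compProd_condDensityKernel {μ : Measure α} [SFinite μ]
    (hf : Measurable f) (hfin : ∀ᵐ a ∂μ, ∫⁻ b, f (a, b) ∂ν ≠ ∞) :
    (μ.prod ν).withDensity f =
      (μ.withDensity fun a => ∫⁻ b, f (a, b) ∂ν) ⊗ₘ condDensityKernel ν f := by
  have := isFiniteKernel_condDensityKernel (ν := ν) hf
  ext s hs
  have hs_a (a : α) : MeasurableSet (Prod.mk a ⁻¹' s) := measurable_prodMk_left hs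
  rw [withDensity_apply _ hs, Measure.compProd_apply hs,
    lintegral_withDensity_eq_lintegral_mul _ hf.lintegral_prod_right'
      (Kernel.measurable_kernel_prodMk_left hs),
    ← lintegral_indicator hs, lintegral_prod _ (hf.indicator hs).aemeasurable]
  refine lintegral_congr_ae ?_
  filter_upwards [hfin] with a ha
  have hslice : ∫⁻ b, s.indicator f (a, b) ∂ν = ∫⁻ b in Prod.mk a ⁻¹' s, f (a, b) ∂ν :=
    lintegral_indicator (hs_a a) fun b => f (a, b)
  have hle : ∫⁻ b in Prod.mk a ⁻¹' s, f (a, b) ∂ν ≤ ∫⁻ b, f (a, b) ∂ν :=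
    setLIntegral_le_lintegral _ _
  rw [Pi.mul_apply, condDensityKernel_apply hf, withDensity_apply _ (hs_a a), hslice]
  simp_rw [div_eq_mul_inv]
  rw [lintegral_mul_const _ (by fun_prop), ← div_eq_mul_inv,
    ENNReal.mul_div_cancel' (fun h0 => le_zero_iff.mp (h0 ▸ hle)) (fun h => absurd h ha)]

theorem ae_condDistrib_eq_withDensity_of_map_eq_withDensity_prod [StandardBorelSpace β]
    [Nonempty β] {Ω : Type*} [MeasurableSpace Ω] {P : Measure Ω} [IsFiniteMeasure P]
    {μ : Measure α} [SFinite μ] {W : Ω → α} {V : Ω → β} (hW : Measurable W) (hV : Measurable V)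
    (hf : Measurable f) (hlaw : P.map (fun ω => (W ω, V ω)) = (μ.prod ν).withDensity f) :
    ∀ᵐ a ∂(P.map W), 0 < ∫⁻ b, f (a, b) ∂ν ∧ ∫⁻ b, f (a, b) ∂ν < ∞ ∧
      condDistrib V W P a = ν.withDensity fun b => f (a, b) / ∫⁻ b', f (a, b') ∂ν := by
  set m : α → ℝ≥0∞ := fun a => ∫⁻ b, f (a, b) ∂ν
  have hm : Measurable m := hf.lintegral_prod_right'
  have hmarg : P.map W = μ.withDensity m := by
    rw [← Measure.map_fst_withDensity_prod μ ν hf, ← hlaw,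
      Measure.map_map measurable_fst (hW.prodMk hV)]
    rfl
  have hfin : ∀ᵐ a ∂μ, m a ≠ ∞ := by
    have htotal : ∫⁻ a, m a ∂μ ≠ ∞ := by
      rw [← setLIntegral_univ, ← withDensity_apply _ .univ, ← hmarg]
      exact measure_ne_top _ _
    filter_upwards [ae_lt_top hm htotal] with a ha using ha.ne
  have := isFiniteKernel_condDensityKernel (ν := ν) hf
  have hcond := condDistrib_ae_eq_of_measure_eq_compProd_of_measurable hW hV
    (κ := condDensityKernel ν f)
    (by rw [hlaw, hmarg, withDensity_prod_eq_compProd_condDensityKernel hf hfin])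
  have hpos : ∀ᵐ a ∂(P.map W), m a ≠ 0 := by
    rw [hmarg]
    exact (ae_withDensity_iff hm).2 (ae_of_all _ fun _ h => h)
  have hlt : ∀ᵐ a ∂(P.map W), m a ≠ ∞ := by
    rw [hmarg]
    exact (withDensity_absolutelyContinuous μ m).ae_le hfin
  filter_upwards [hpos, hlt, hcond] with a h0 htop hκ
  exact ⟨pos_iff_ne_zero.2 h0, lt_top_iff_ne_top.2 htop, hκ.trans (condDensityKernel_apply hf a)⟩

end ProbabilityTheory

/-- Bridge density: if the joint law of `(X, Y, Z)` has the Markov factorized density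
`(x₀, x, x_f) ↦ ρ₀ x₀ * q₁ (x₀, x) * q₂ (x, x_f)` with respect to Lebesgue measure on `ℝ³`,
and `q (x₀, x_f) = ∫ q₁ (x₀, y) * q₂ (y, x_f) dy`, then for `(law of (X, Z))`-almost every
`(x₀, x_f)` one has `0 < q (x₀, x_f) < ∞` and the conditional distribution of the midpoint `Y`
given `(X, Z) = (x₀, x_f)` has Lebesgue density
`x ↦ q₂ (x, x_f) * q₁ (x₀, x) / q (x₀, x_f)`. -/
theorem condDistrib_bridge_density
    {Ω : Type*} [MeasurableSpace Ω] (μ : Measure Ω) [IsProbabilityMeasure μ]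
    (X Y Z : Ω → ℝ) (hX : Measurable X) (hY : Measurable Y) (hZ : Measurable Z)
    (ρ₀ : ℝ → ℝ≥0∞) (q₁ q₂ : ℝ × ℝ → ℝ≥0∞)
    (hρ₀ : Measurable ρ₀) (hq₁ : Measurable q₁) (hq₂ : Measurable q₂)
    (hlaw : μ.map (fun ω => (X ω, Y ω, Z ω)) =
      volume.withDensity (fun p : ℝ × ℝ × ℝ => ρ₀ p.1 * q₁ (p.1, p.2.1) * q₂ (p.2.1, p.2.2)))
    (q : ℝ × ℝ → ℝ≥0∞)
    (hq : ∀ p : ℝ × ℝ, q p = ∫⁻ y, q₁ (p.1, y) * q₂ (y, p.2)) :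
    ∀ᵐ p ∂(μ.map (fun ω => (X ω, Z ω))),
      0 < q p ∧ q p < ∞ ∧
      condDistrib Y (fun ω => (X ω, Z ω)) μ p =
        volume.withDensity (fun x => q₂ (x, p.2) * q₁ (p.1, x) / q p) := by
  set F : (ℝ × ℝ) × ℝ → ℝ≥0∞ := fun r => ρ₀ r.1.1 * q₁ (r.1.1, r.2) * q₂ (r.2, r.1.2) with hF_def
  have hF : Measurable F := by fun_prop
  have hlaw' : μ.map (fun ω => ((X ω, Z ω), Y ω)) = (volume.prod volume).withDensity F := by
    calc μ.map (fun ω => ((X ω, Z ω), Y ω))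
        = (μ.map fun ω => (X ω, Y ω, Z ω)).map fun r => ((r.1, r.2.2), r.2.1) := by
          rw [Measure.map_map (by fun_prop) (by fun_prop)]
          rfl
      _ = (volume.prod volume).withDensity F := by
          rw [hlaw, Measure.volume_eq_prod, Measure.volume_eq_prod]
          exact Measure.map_withDensity_prod_prod_swap_last _ _ _ F
  have hmarg (p : ℝ × ℝ) : ∫⁻ x, F (p, x) = ρ₀ p.1 * q p := by
    simp_rw [hF_def, mul_assoc]
    rw [lintegral_const_mul _ (by fun_prop), hq]
  filter_upwards [ae_condDistrib_eq_withDensity_of_map_eq_withDensity_prod (hX.prodMk hZ) hY hF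
    hlaw'] with p ⟨hpos, hlt, hκ⟩
  simp only [hmarg] at hpos hlt hκ
  obtain ⟨hρ_pos, hq_pos⟩ := ENNReal.mul_pos_iff.1 hpos
  have hρ_top := ENNReal.lt_top_of_mul_ne_top_left hlt.ne hq_pos.ne'
  refine ⟨hq_pos, ENNReal.lt_top_of_mul_ne_top_right hlt.ne hρ_pos.ne', hκ.trans ?_⟩
  congr 1 with x
  simp only [hF_def]
  rw [mul_assoc, ENNReal.mul_div_mul_left _ _ hρ_pos.ne' hρ_top.ne, mul_comm]
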